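/- arXiv:1810.09338 — 4 statements merged into one kernel-verified Lean document; each statement's English description precedes it below -/
import Mathlib

section
/- Let F ∈ ℂ[x₀, …, x_n] and G ∈ ℂ[y₀, …, y_m] be homogeneous polynomials of the same degree d in disjoint sets of variables, both regarded as elements of ℂ[x₀, …, x_n, y₀, …, y_m]. If there exists an integer s with 0 < s < d such that dim H_{∂^s F} = srk(F) and dim H_{∂^s G} = srk(G), then srk(F + G) = srk(F) + srk(G), where all symmetric ranks are computed in ℂ[x₀, …, x_n, y₀, …, y_m]. -/
open MvPolynomial

/-- Iterated partial derivative of a polynomial along a list of variables. -/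
noncomputable def derivList {σ : Type*} (l : List σ) (F : MvPolynomial σ ℂ) :
    MvPolynomial σ ℂ :=
  l.foldl (fun G i => MvPolynomial.pderiv i G) F

/-- `Hspan s F` is the linear span of all `s`-th order partial derivatives of `F`. -/
noncomputable def Hspan {σ : Type*} (s : ℕ) (F : MvPolynomial σ ℂ) :
    Submodule ℂ (MvPolynomial σ ℂ) :=
  Submodule.span ℂ {P | ∃ l : List σ, l.length = s ∧ P = derivList l F}

/-- The symmetric (Waring) rank of `F` with respect to degree `d` decompositions:
the least `h` such that `F = ∑ᵢ cᵢ • Lᵢ^d` with `Lᵢ` linear forms. -/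
noncomputable def srk {σ : Type*} (d : ℕ) (F : MvPolynomial σ ℂ) : ℕ :=
  sInf {h | ∃ c : Fin h → ℂ, ∃ L : Fin h → MvPolynomial σ ℂ,
    (∀ i, (L i).IsHomogeneous 1) ∧ F = ∑ i, c i • (L i) ^ d}

/-! Every `s`-th derivative of `∑ᵢ cᵢ Lᵢ ^ d` lies in the span of the `Lᵢ ^ (d - s)`, so
`dim H_{∂^s F} ≤ srk F` (the catalecticant bound). When `F` and `G` involve disjoint variables,
each first-order derivation kills `F` or `G`, so for `0 < s` the space `H_{∂^s (F + G)}` is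
`H_{∂^s F} + H_{∂^s G}`; these meet only in constants, which vanish in degree `d - s > 0`.
Hence the catalecticant bound for `F + G` gives `srk F + srk G ≤ srk (F + G)`, and concatenating
decompositions gives the reverse inequality. -/

namespace MvPolynomial

variable {R σ : Type*}

section CommSemiring
variable [CommSemiring R]

lemma vars_pderiv_subset (i : σ) (p : MvPolynomial σ R) : (pderiv i p).vars ⊆ p.vars := by
  classical
  intro j hj
  obtain ⟨m, hm, hjm⟩ := (mem_vars_iff_mem_support j).mp hj
  rw [mem_support_iff, coeff_pderiv] at hm
  refine (mem_vars_iff_mem_support j).mpr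
    ⟨m + Finsupp.single i 1, mem_support_iff.mpr (left_ne_zero_of_mul hm), ?_⟩
  rw [Finsupp.mem_support_iff] at hjm ⊢
  simp [hjm]

lemma IsHomogeneous.eq_zero_of_vars_eq_empty {p : MvPolynomial σ R} {n : ℕ}
    (hp : p.IsHomogeneous n) (hn : n ≠ 0) (h : p.vars = ∅) : p = 0 := by
  rw [vars_eq_empty_iff_eq_C.mp h, hp.coeff_eq_zero (by simpa using hn.symm), C_0]

lemma IsHomogeneous.pderiv_eq_C {L : MvPolynomial σ R} (hL : L.IsHomogeneous 1) (i : σ) :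
    pderiv i L = C (coeff 0 (pderiv i L)) :=
  totalDegree_eq_zero_iff_eq_C.mp (totalDegree_zero_iff_isHomogeneous _ |>.mpr hL.pderiv)

lemma disjoint_vars_rename_inl_rename_inr {σ' : Type*} (p : MvPolynomial σ R)
    (q : MvPolynomial σ' R) : Disjoint (rename Sum.inl p).vars (rename Sum.inr q).vars := by
  classical
  refine Finset.disjoint_left.mpr fun x hp hq => ?_
  obtain ⟨a, -, rfl⟩ := Finset.mem_image.mp (vars_rename _ p hp)
  obtain ⟨b, -, hb⟩ := Finset.mem_image.mp (vars_rename _ q hq)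
  exact Sum.inr_ne_inl hb

end CommSemiring

lemma IsHomogeneous.eq_zero_of_forall_pderiv_eq_zero [Fintype σ] [CommRing R] [IsDomain R]
    [CharZero R] {p : MvPolynomial σ R} {n : ℕ} (hp : p.IsHomogeneous n) (hn : n ≠ 0)
    (h : ∀ i, pderiv i p = 0) : p = 0 := by
  simpa [h, hn] using hp.sum_X_mul_pderiv.symm

end MvPolynomial

section derivList

variable {σ : Type*}

lemma derivList_cons (i : σ) (l : List σ) (F : MvPolynomial σ ℂ) :
    derivList (i :: l) F = derivList l (pderiv i F) := rfl

lemma derivList_append_singleton (l : List σ) (i : σ) (F : MvPolynomial σ ℂ) :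
    derivList (l ++ [i]) F = pderiv i (derivList l F) := by
  simp [derivList, List.foldl_append]

lemma derivList_add (l : List σ) (F G : MvPolynomial σ ℂ) :
    derivList l (F + G) = derivList l F + derivList l G := by
  induction l generalizing F G with
  | nil => rfl
  | cons i l ih => simp only [derivList_cons, map_add, ih]

lemma derivList_smul (l : List σ) (a : ℂ) (F : MvPolynomial σ ℂ) :
    derivList l (a • F) = a • derivList l F := by
  induction l generalizing F with
  | nil => rfl
  | cons i l ih => simp only [derivList_cons, Derivation.map_smul, ih]

noncomputable def derivListₗ (l : List σ) : MvPolynomial σ ℂ →ₗ[ℂ] MvPolynomial σ ℂ where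
  toFun := derivList l
  map_add' := derivList_add l
  map_smul' := derivList_smul l

lemma derivList_zero (l : List σ) : derivList l (0 : MvPolynomial σ ℂ) = 0 :=
  map_zero (derivListₗ l)

lemma derivList_sum {ι : Type*} (l : List σ) (t : Finset ι) (f : ι → MvPolynomial σ ℂ) :
    derivList l (∑ i ∈ t, f i) = ∑ i ∈ t, derivList l (f i) :=
  map_sum (derivListₗ l) f t

lemma MvPolynomial.IsHomogeneous.derivList {F : MvPolynomial σ ℂ} {n : ℕ}
    (hF : F.IsHomogeneous n) (l : List σ) : (derivList l F).IsHomogeneous (n - l.length) := by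
  induction l generalizing F n with
  | nil => exact hF
  | cons i l ih =>
    rw [derivList_cons, List.length_cons, Nat.add_comm, ← Nat.sub_sub]
    exact ih hF.pderiv

lemma vars_derivList_subset (l : List σ) (F : MvPolynomial σ ℂ) :
    (derivList l F).vars ⊆ F.vars := by
  induction l generalizing F with
  | nil => exact subset_rfl
  | cons i l ih => exact (ih _).trans (vars_pderiv_subset i F)

lemma derivList_pow_mem_span_singleton {L : MvPolynomial σ ℂ} (hL : L.IsHomogeneous 1)
    (l : List σ) (k : ℕ) : derivList l (L ^ k) ∈ ℂ ∙ L ^ (k - l.length) := by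
  induction l generalizing k with
  | nil => exact Submodule.mem_span_singleton_self _
  | cons i l ih =>
    obtain ⟨e, he⟩ : ∃ e, pderiv i L = C e := ⟨_, hL.pderiv_eq_C i⟩
    have hpow : pderiv i (L ^ k) = (k * e) • L ^ (k - 1) := by
      rw [pderiv_pow, he, smul_eq_C_mul, map_mul, map_natCast]
      ring
    rw [derivList_cons, hpow, derivList_smul, List.length_cons, Nat.add_comm, ← Nat.sub_sub]
    exact Submodule.smul_mem _ _ (ih _)

end derivList

section Hspan

variable {σ : Type*}

lemma derivList_mem_Hspan (l : List σ) (F : MvPolynomial σ ℂ) :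
    derivList l F ∈ Hspan l.length F :=
  Submodule.subset_span ⟨l, rfl, rfl⟩

lemma Hspan_le {s : ℕ} {F : MvPolynomial σ ℂ} {M : Submodule ℂ (MvPolynomial σ ℂ)}
    (h : ∀ l : List σ, l.length = s → derivList l F ∈ M) : Hspan s F ≤ M :=
  Submodule.span_le.mpr fun _ ⟨l, hl, hP⟩ => hP ▸ h l hl

instance [Finite σ] (s : ℕ) (F : MvPolynomial σ ℂ) : FiniteDimensional ℂ (Hspan s F) := by
  refine FiniteDimensional.span_of_finite ℂ ((Set.finite_range
    fun g : Fin s → σ => derivList (List.ofFn g) F).subset ?_)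
  rintro _ ⟨l, rfl, rfl⟩
  exact ⟨l.get, by simp only [List.ofFn_get]⟩

lemma Hspan_le_homogeneousSubmodule {F : MvPolynomial σ ℂ} {d : ℕ} (hF : F.IsHomogeneous d)
    (s : ℕ) : Hspan s F ≤ homogeneousSubmodule σ ℂ (d - s) :=
  Hspan_le fun l hl => hl ▸ hF.derivList l

lemma Hspan_le_supported_vars (s : ℕ) (F : MvPolynomial σ ℂ) :
    Hspan s F ≤ Subalgebra.toSubmodule (supported ℂ (F.vars : Set σ)) :=
  Hspan_le fun l _ => mem_supported.mpr (Finset.coe_subset.mpr (vars_derivList_subset l F))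

lemma eq_zero_of_Hspan_eq_bot [Fintype σ] {F : MvPolynomial σ ℂ} {d s : ℕ}
    (hF : F.IsHomogeneous d) (hsd : s ≤ d) (h : Hspan s F = ⊥) : F = 0 := by
  replace h : ∀ l : List σ, l.length = s → derivList l F = 0 := fun l hl => by
    simpa [h, hl] using derivList_mem_Hspan l F
  induction s with
  | zero => exact h [] rfl
  | succ s ih =>
    refine ih (by omega) fun l hl => ?_
    refine (hF.derivList l).eq_zero_of_forall_pderiv_eq_zero (by omega) fun i => ?_
    rw [← derivList_append_singleton]
    exact h _ (by simp [hl])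

lemma Hspan_add_le_sup (s : ℕ) (F G : MvPolynomial σ ℂ) :
    Hspan s (F + G) ≤ Hspan s F ⊔ Hspan s G := by
  refine Hspan_le fun l hl => ?_
  subst hl
  rw [derivList_add]
  exact add_mem (Submodule.mem_sup_left (derivList_mem_Hspan l F))
    (Submodule.mem_sup_right (derivList_mem_Hspan l G))

lemma derivList_mem_Hspan_add {F G : MvPolynomial σ ℂ} (hFG : Disjoint F.vars G.vars)
    {l : List σ} (hl : l ≠ []) : derivList l F ∈ Hspan l.length (F + G) := by
  obtain ⟨i, l, rfl⟩ := List.exists_cons_of_ne_nil hl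
  by_cases hiF : i ∈ F.vars
  · have hG : pderiv i G = 0 := pderiv_eq_zero_of_notMem_vars (Finset.disjoint_left.mp hFG hiF)
    have := derivList_mem_Hspan (i :: l) (F + G)
    rwa [derivList_cons, map_add, hG, add_zero, ← derivList_cons] at this
  · rw [derivList_cons, pderiv_eq_zero_of_notMem_vars hiF, derivList_zero]
    exact zero_mem _

lemma Hspan_le_Hspan_add {F G : MvPolynomial σ ℂ} {s : ℕ} (hs : 0 < s)
    (hFG : Disjoint F.vars G.vars) : Hspan s F ≤ Hspan s (F + G) := by
  refine Hspan_le fun l hl => ?_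
  subst hl
  exact derivList_mem_Hspan_add hFG (List.ne_nil_of_length_pos hs)

lemma Hspan_add_eq_sup {F G : MvPolynomial σ ℂ} {s : ℕ} (hs : 0 < s)
    (hFG : Disjoint F.vars G.vars) : Hspan s (F + G) = Hspan s F ⊔ Hspan s G :=
  le_antisymm (Hspan_add_le_sup s F G)
    (sup_le (Hspan_le_Hspan_add hs hFG) (add_comm G F ▸ Hspan_le_Hspan_add hs hFG.symm))

lemma disjoint_Hspan {F G : MvPolynomial σ ℂ} {d s : ℕ} (hsd : s < d)
    (hG : G.IsHomogeneous d) (hFG : Disjoint F.vars G.vars) :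
    Disjoint (Hspan s F) (Hspan s G) := by
  refine Submodule.disjoint_def.mpr fun p hpF hpG => ?_
  have hvars : p.vars = ∅ := Finset.eq_empty_of_forall_notMem fun i hi =>
    Finset.disjoint_left.mp hFG (mem_supported.mp (Hspan_le_supported_vars s F hpF) hi)
      (mem_supported.mp (Hspan_le_supported_vars s G hpG) hi)
  exact (Hspan_le_homogeneousSubmodule hG s hpG).eq_zero_of_vars_eq_empty (by omega) hvars

lemma finrank_Hspan_add [Finite σ] {F G : MvPolynomial σ ℂ} {d s : ℕ} (hs : 0 < s)
    (hsd : s < d) (hG : G.IsHomogeneous d) (hFG : Disjoint F.vars G.vars) :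
    Module.finrank ℂ (Hspan s (F + G)) =
      Module.finrank ℂ (Hspan s F) + Module.finrank ℂ (Hspan s G) := by
  rw [Hspan_add_eq_sup hs hFG, ← Submodule.finrank_sup_add_finrank_inf_eq,
    (disjoint_Hspan hsd hG hFG).eq_bot, finrank_bot, add_zero]

end Hspan

section Waring

variable {σ : Type*} {d : ℕ}

def HasWaringDecomposition (d : ℕ) (F : MvPolynomial σ ℂ) (h : ℕ) : Prop :=
  ∃ c : Fin h → ℂ, ∃ L : Fin h → MvPolynomial σ ℂ,
    (∀ i, (L i).IsHomogeneous 1) ∧ F = ∑ i, c i • (L i) ^ d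

lemma hasWaringDecomposition_zero : HasWaringDecomposition d (0 : MvPolynomial σ ℂ) 0 :=
  ⟨Fin.elim0, Fin.elim0, fun i => i.elim0, by simp⟩

lemma HasWaringDecomposition.add {F G : MvPolynomial σ ℂ} {a b : ℕ}
    (hF : HasWaringDecomposition d F a) (hG : HasWaringDecomposition d G b) :
    HasWaringDecomposition d (F + G) (a + b) := by
  obtain ⟨c₁, L₁, hL₁, rfl⟩ := hF
  obtain ⟨c₂, L₂, hL₂, rfl⟩ := hG
  refine ⟨Fin.append c₁ c₂, Fin.append L₁ L₂, Fin.addCases (by simpa) (by simpa), ?_⟩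
  simp [Fin.sum_univ_add]

lemma srk_le {F : MvPolynomial σ ℂ} {h : ℕ} (hF : HasWaringDecomposition d F h) :
    srk d F ≤ h :=
  Nat.sInf_le hF

lemma hasWaringDecomposition_srk {F : MvPolynomial σ ℂ} {h : ℕ}
    (hF : HasWaringDecomposition d F h) : HasWaringDecomposition d F (srk d F) :=
  Nat.sInf_mem (s := {h | HasWaringDecomposition d F h}) ⟨h, hF⟩

lemma HasWaringDecomposition.finrank_Hspan_le {F : MvPolynomial σ ℂ} {h : ℕ}
    (hF : HasWaringDecomposition d F h) (s : ℕ) : Module.finrank ℂ (Hspan s F) ≤ h := by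
  obtain ⟨c, L, hL, rfl⟩ := hF
  let W := Submodule.span ℂ (Set.range fun i => L i ^ (d - s))
  have hle : Hspan s (∑ i, c i • L i ^ d) ≤ W := by
    refine Hspan_le fun l hl => ?_
    subst hl
    rw [derivList_sum]
    refine Submodule.sum_mem _ fun i _ => ?_
    rw [derivList_smul]
    have hi : L i ^ (d - l.length) ∈ W := Submodule.subset_span ⟨i, rfl⟩
    exact W.smul_mem _ ((Submodule.span_singleton_le_iff_mem _ _).mpr hi
      (derivList_pow_mem_span_singleton (hL i) l d))
  have : FiniteDimensional ℂ W := FiniteDimensional.span_of_finite ℂ (Set.finite_range _)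
  calc Module.finrank ℂ (Hspan s _) ≤ Module.finrank ℂ W := Submodule.finrank_mono hle
    _ ≤ h := (finrank_range_le_card _).trans_eq (Fintype.card_fin h)

lemma HasWaringDecomposition.finrank_Hspan_le_srk {F : MvPolynomial σ ℂ} {h : ℕ}
    (hF : HasWaringDecomposition d F h) (s : ℕ) : Module.finrank ℂ (Hspan s F) ≤ srk d F :=
  (hasWaringDecomposition_srk hF).finrank_Hspan_le s

lemma hasWaringDecomposition_srk_of_finrank_Hspan_eq [Fintype σ] {F : MvPolynomial σ ℂ} {s : ℕ}
    (hF : F.IsHomogeneous d) (hsd : s ≤ d) (hrank : Module.finrank ℂ (Hspan s F) = srk d F) :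
    HasWaringDecomposition d F (srk d F) := by
  -- `srk d F = sInf ∅ = 0` if `F` had no decomposition; the rank hypothesis then forces `F = 0`.
  by_cases hF0 : F = 0
  · exact hF0 ▸ hasWaringDecomposition_srk hasWaringDecomposition_zero
  have hpos : 0 < srk d F := by
    rw [← hrank, Nat.pos_iff_ne_zero, Ne, Submodule.finrank_eq_zero]
    exact fun h => hF0 (eq_zero_of_Hspan_eq_bot hF hsd h)
  exact Nat.sInf_mem (Nat.nonempty_of_pos_sInf hpos)

end Waring

/-- **Strassen for symmetric ranks via catalecticants.**
Let `F ∈ ℂ[x₀,…,x_n]` and `G ∈ ℂ[y₀,…,y_m]` be homogeneous of the same degree `d` in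
disjoint sets of variables, regarded in `ℂ[x₀,…,x_n,y₀,…,y_m]`. If for some
`0 < s < d` one has `dim H_{∂^s F} = srk F` and `dim H_{∂^s G} = srk G`, then
`srk(F + G) = srk F + srk G`. -/
theorem strassen_symmetric (n m d s : ℕ) (hs0 : 0 < s) (hsd : s < d)
    (F₀ : MvPolynomial (Fin (n + 1)) ℂ) (G₀ : MvPolynomial (Fin (m + 1)) ℂ)
    (hF : F₀.IsHomogeneous d) (hG : G₀.IsHomogeneous d)
    (F : MvPolynomial (Fin (n + 1) ⊕ Fin (m + 1)) ℂ)
    (G : MvPolynomial (Fin (n + 1) ⊕ Fin (m + 1)) ℂ)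
    (hFdef : F = rename Sum.inl F₀) (hGdef : G = rename Sum.inr G₀)
    (hdF : Module.finrank ℂ (Hspan s F) = srk d F)
    (hdG : Module.finrank ℂ (Hspan s G) = srk d G) :
    srk d (F + G) = srk d F + srk d G := by
  have hFh : F.IsHomogeneous d := hFdef ▸ hF.rename_isHomogeneous
  have hGh : G.IsHomogeneous d := hGdef ▸ hG.rename_isHomogeneous
  have hvars : Disjoint F.vars G.vars :=
    hFdef ▸ hGdef ▸ disjoint_vars_rename_inl_rename_inr F₀ G₀
  have hFG := (hasWaringDecomposition_srk_of_finrank_Hspan_eq hFh hsd.le hdF).add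
    (hasWaringDecomposition_srk_of_finrank_Hspan_eq hGh hsd.le hdG)
  refine le_antisymm (srk_le hFG) ?_
  calc srk d F + srk d G = Module.finrank ℂ (Hspan s (F + G)) := by
        rw [finrank_Hspan_add hs0 hsd hGh hvars, hdF, hdG]
    _ ≤ srk d (F + G) := hFG.finrank_Hspan_le_srk s
end

section
/- Let d and h be positive integers with 2h < ⌈(d+2)/2⌉. Then there exists a binary form F ∈ ℂ[x₀, x₁], homogeneous of degree d, with srk(F) ≤ h, such that, setting k = ⌊(d+1)/2⌋, the span of the k-th order partial derivatives of the degree-(d+1) form x₀F has dimension at least 2h, i.e. dim H_{∂^k(x₀F)} ≥ 2h. (Equivalently, the middle catalecticant, or Hankel, matrix of x₀F has rank at least 2h, so x₀F does not lie in the (2h−1)-st secant variety of the rational normal curve of degree d+1, while F lies in the h-th secant variety of the rational normal curve of degree d.) -/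
open MvPolynomial

/-!
For a primitive `h`-th root of unity `ζ`, the form `F = h⁻¹ ∑_{i<h} (x₀ + ζ^i x₁)^d` has Waring
rank at most `h`, and averaging over the roots keeps exactly the terms `C(d,j) x₀^(d-j) x₁^j` of
`(x₀ + x₁)^d` with `h ∣ j`. Pairing the derivatives `∂₀^(k-b) ∂₁^b (x₀F)`, `b < 2h`, with the
coefficients of `x₀^(d+1-k-s) x₁^s`, `s < 2h`, gives, after rescaling the rows by nonzero
factorials, the Hankel matrix `[h ∣ s+b] (d+1-s-b)`. Its rows `s ≡ -r` and columns `b ≡ r`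
(mod `h`) form `2 × 2` blocks of determinant `-h²`, so these `2h` derivatives are independent.
-/

open scoped Nat

section derivList

variable {σ : Type*}

theorem derivList_append (l₁ l₂ : List σ) (F : MvPolynomial σ ℂ) :
    derivList (l₁ ++ l₂) F = derivList l₂ (derivList l₁ F) :=
  List.foldl_append ..

theorem derivList_replicate (n : ℕ) (i : σ) (F : MvPolynomial σ ℂ) :
    derivList (List.replicate n i) F = (pderiv i)^[n] F := by
  induction n generalizing F with
  | zero => rfl
  | succ n ih => exact ih (pderiv i F)

instance Hspan.finiteDimensional [Finite σ] (s : ℕ) (F : MvPolynomial σ ℂ) :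
    FiniteDimensional ℂ (Hspan s F) := by
  refine FiniteDimensional.span_of_finite ℂ (((List.finite_length_eq σ s).image
    fun l => derivList l F).subset ?_)
  rintro _ ⟨l, hl, rfl⟩
  exact ⟨l, hl, rfl⟩

end derivList

theorem MvPolynomial.coeff_iterate_pderiv {R σ : Type*} [CommSemiring R] (i : σ) (n : ℕ)
    (p : MvPolynomial σ R) (m : σ →₀ ℕ) :
    coeff m ((pderiv i)^[n] p) = coeff (m + Finsupp.single i n) p * (m i + n).descFactorial n := by
  induction n generalizing p with
  | zero => simp
  | succ n ih =>
    rw [Function.iterate_succ_apply, ih, coeff_pderiv, add_assoc, ← Finsupp.single_add,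
      Finsupp.add_apply, Finsupp.single_eq_same, ← add_assoc, Nat.succ_descFactorial_succ]
    push_cast
    ring

theorem IsPrimitiveRoot.sum_range_pow_pow {K : Type*} [Field K] {ζ : K} {h : ℕ}
    (hζ : IsPrimitiveRoot ζ h) (j : ℕ) :
    ∑ i ∈ Finset.range h, (ζ ^ i) ^ j = if h ∣ j then (h : K) else 0 := by
  simp_rw [← pow_mul, mul_comm _ j, pow_mul]
  split_ifs with hj
  · simp [(hζ.pow_eq_one_iff_dvd j).mpr hj]
  · have hne : ζ ^ j ≠ 1 := fun e => hj ((hζ.pow_eq_one_iff_dvd j).mp e)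
    rw [geom_sum_eq hne, ← pow_mul, mul_comm, pow_mul, hζ.pow_eq_one, one_pow, sub_self,
      zero_div]

theorem Nat.eq_or_eq_add_of_modEq {h r b : ℕ} (hr : r < h) (hb : b < 2 * h)
    (hbr : b ≡ r [MOD h]) : b = r ∨ b = r + h := by
  have hdiv := Nat.mod_add_div b h
  rw [hbr, Nat.mod_eq_of_lt hr] at hdiv
  have hq : b / h < 2 := Nat.div_lt_of_lt_mul (by linarith)
  interval_cases b / h <;> omega

section BinaryForms

open Finset

noncomputable def binExp (p q : ℕ) : Fin 2 →₀ ℕ := Finsupp.single 0 p + Finsupp.single 1 q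

@[simp] theorem binExp_apply_zero (p q : ℕ) : binExp p q 0 = p := by simp [binExp]

@[simp] theorem binExp_apply_one (p q : ℕ) : binExp p q 1 = q := by simp [binExp]

theorem binExp_add_single_zero (p q n : ℕ) :
    binExp p q + Finsupp.single 0 n = binExp (p + n) q := by
  ext i; fin_cases i <;> simp

theorem binExp_add_single_one (p q n : ℕ) :
    binExp p q + Finsupp.single 1 n = binExp p (q + n) := by
  ext i; fin_cases i <;> simp

theorem coeff_binExp_X_zero_mul (p q : ℕ) (G : MvPolynomial (Fin 2) ℂ) :
    coeff (binExp (p + 1) q) (X 0 * G) = coeff (binExp p q) G := by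
  rw [← binExp_add_single_zero, add_comm, coeff_X_mul]

theorem coeff_binExp_derivList (a b p q : ℕ) (G : MvPolynomial (Fin 2) ℂ) :
    coeff (binExp a b) (derivList (List.replicate p 0 ++ List.replicate q 1) G)
      = coeff (binExp (a + p) (b + q)) G * (a + p).descFactorial p * (b + q).descFactorial q := by
  rw [derivList_append, derivList_replicate, derivList_replicate, coeff_iterate_pderiv,
    coeff_iterate_pderiv, binExp_add_single_one, binExp_add_single_zero]
  simp only [binExp_apply_zero, binExp_apply_one]

theorem X_zero_pow_mul_C_mul_X_one_pow {R : Type*} [CommSemiring R] (z : R) (p q : ℕ) :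
    (X 0 ^ p * (C z * X 1) ^ q : MvPolynomial (Fin 2) R) = monomial (binExp p q) (z ^ q) := by
  rw [mul_pow, ← C_pow, X_pow_eq_monomial, X_pow_eq_monomial, C_mul_monomial, monomial_mul,
    one_mul, mul_one, binExp]

theorem coeff_binExp_X_zero_add_C_mul_X_one_pow {R : Type*} [CommSemiring R] (z : R)
    (n m : ℕ) :
    coeff (binExp n m) ((X 0 + C z * X 1) ^ (n + m)) = (n + m).choose m * z ^ m := by
  simp_rw [add_pow, coeff_sum, X_zero_pow_mul_C_mul_X_one_pow, ← Nat.cast_comm,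
    ← map_natCast (C (σ := Fin 2)), coeff_C_mul, coeff_monomial]
  rw [sum_eq_single n]
  · rw [Nat.add_sub_cancel_left, if_pos rfl, Nat.choose_symm_add]
  · intro j _ hj
    rw [if_neg fun he => hj (by simpa using DFunLike.congr_fun he 0), mul_zero]
  · simp

end BinaryForms

section RootsOfUnityForm

open Finset

noncomputable def rootsOfUnityForm (ζ : ℂ) (h d : ℕ) : MvPolynomial (Fin 2) ℂ :=
  (h : ℂ)⁻¹ • ∑ i : Fin h, (X 0 + C (ζ ^ (i : ℕ)) * X 1) ^ d

variable (ζ : ℂ) (h d : ℕ)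

theorem isHomogeneous_X_zero_add_C_mul_X_one (z : ℂ) :
    (X 0 + C z * X 1 : MvPolynomial (Fin 2) ℂ).IsHomogeneous 1 :=
  (isHomogeneous_X ℂ 0).add (by simpa using (isHomogeneous_C (Fin 2) z).mul (isHomogeneous_X ℂ 1))

theorem isHomogeneous_rootsOfUnityForm : (rootsOfUnityForm ζ h d).IsHomogeneous d := by
  refine Submodule.smul_mem (homogeneousSubmodule (Fin 2) ℂ d) _
    (IsHomogeneous.sum _ _ d fun i _ => ?_)
  simpa only [one_mul] using (isHomogeneous_X_zero_add_C_mul_X_one _).pow d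

theorem srk_rootsOfUnityForm_le : srk d (rootsOfUnityForm ζ h d) ≤ h :=
  Nat.sInf_le ⟨fun _ => (h : ℂ)⁻¹, fun i => X 0 + C (ζ ^ (i : ℕ)) * X 1,
    fun _ => isHomogeneous_X_zero_add_C_mul_X_one _, smul_sum⟩

variable {ζ h}

theorem coeff_binExp_rootsOfUnityForm (hh : h ≠ 0) (hζ : IsPrimitiveRoot ζ h) (n m : ℕ) :
    coeff (binExp n m) (rootsOfUnityForm ζ h (n + m))
      = if h ∣ m then ((n + m).choose m : ℂ) else 0 := by
  simp_rw [rootsOfUnityForm, coeff_smul, coeff_sum, coeff_binExp_X_zero_add_C_mul_X_one_pow,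
    ← mul_sum, Fin.sum_univ_eq_sum_range (fun i => (ζ ^ i) ^ m), hζ.sum_range_pow_pow]
  split_ifs
  · rw [smul_eq_mul, mul_comm, mul_inv_cancel_right₀ (Nat.cast_ne_zero.mpr hh)]
  · rw [mul_zero, smul_zero]

end RootsOfUnityForm

section CyclicHankel

variable (K : Type*) [Field K]

def cyclicHankel (h : ℕ) (D : K) : Matrix (Fin (2 * h)) (Fin (2 * h)) K :=
  Matrix.of fun i j => if h ∣ (i + j : ℕ) then D - (i + j : ℕ) else 0

theorem linearIndependent_cyclicHankel [CharZero K] (h : ℕ) (D : K) :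
    LinearIndependent K fun i => cyclicHankel K h D i := by
  set M := cyclicHankel K h D
  rw [Fintype.linearIndependent_iff]
  intro g hg i
  have row (s : Fin (2 * h)) : ∑ j, g j * M j s = 0 := by simpa using congr_fun hg s
  have hpos : 0 < h := by have := i.2; omega
  set r := (i : ℕ) % h
  have hr : r < h := Nat.mod_lt _ hpos
  let j₀ : Fin (2 * h) := ⟨r, by omega⟩
  let j₁ : Fin (2 * h) := ⟨r + h, by omega⟩
  have block (s : Fin (2 * h)) (hs : h ∣ r + s) :
      ∑ j, g j * M j s = g j₀ * M j₀ s + g j₁ * M j₁ s := by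
    refine Fintype.sum_eq_add j₀ j₁ (by simp [j₀, j₁, Fin.ext_iff]; omega) fun j hj => ?_
    have hjs : ¬ h ∣ j + s := fun hjs => by
      have hjr : (j : ℕ) ≡ r [MOD h] := Nat.ModEq.add_right_cancel' s
        ((Nat.modEq_zero_iff_dvd.mpr hjs).trans (Nat.modEq_zero_iff_dvd.mpr hs).symm)
      rcases Nat.eq_or_eq_add_of_modEq hr j.2 hjr with e | e
      exacts [hj.1 (Fin.ext e), hj.2 (Fin.ext e)]
    simp [M, cyclicHankel, hjs]
  set u := (h - r) % h
  have hu : h ∣ r + u := Nat.dvd_of_mod_eq_zero <| by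
    rw [Nat.add_mod_mod, Nat.add_sub_cancel' hr.le, Nat.mod_self]
  have hu' : u < h := Nat.mod_lt _ hpos
  have E₀ := block ⟨u, by omega⟩ hu
  have E₁ := block ⟨u + h, by omega⟩ (by simpa [← add_assoc] using hu)
  rw [row] at E₀ E₁
  simp only [M, cyclicHankel, Matrix.of_apply, j₀, j₁, ← add_assoc, add_right_comm r h u,
    Nat.dvd_add_self_right, hu, if_true] at E₀ E₁
  push_cast at E₀ E₁
  have hh : (h : K) ≠ 0 := Nat.cast_ne_zero.mpr hpos.ne'
  set A := D - r - u
  have g₀ : (h * h : K) * g j₀ = 0 := by linear_combination (A - 2 * h) * E₀ - (A - h) * E₁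
  have g₁ : (h * h : K) * g j₁ = 0 := by linear_combination (h - A) * E₀ + A * E₁
  rcases Nat.eq_or_eq_add_of_modEq hr i.2 (Nat.mod_modEq i h).symm with e | e
  · rw [show i = j₀ from Fin.ext e]
    exact (mul_eq_zero.mp g₀).resolve_left (mul_ne_zero hh hh)
  · rw [show i = j₁ from Fin.ext e]
    exact (mul_eq_zero.mp g₁).resolve_left (mul_ne_zero hh hh)

end CyclicHankel

theorem coeff_binExp_derivList_X_zero_mul_rootsOfUnityForm {ζ : ℂ} {h : ℕ} (hh : h ≠ 0)
    (hζ : IsPrimitiveRoot ζ h) {d e p s b : ℕ} (hsb : s + b ≤ d) (hdeg : e + p + (s + b) = d + 1) :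
    (e ! * s ! : ℂ) * coeff (binExp e s)
        (derivList (List.replicate p 0 ++ List.replicate b 1) (X 0 * rootsOfUnityForm ζ h d))
      = if h ∣ s + b then (d ! : ℂ) * ((d : ℂ) + 1 - (s + b : ℕ)) else 0 := by
  obtain ⟨n, rfl⟩ : ∃ n, d = n + (s + b) := ⟨d - (s + b), by omega⟩
  have he : e + p = n + 1 := by omega
  rw [coeff_binExp_derivList, he, coeff_binExp_X_zero_mul, coeff_binExp_rootsOfUnityForm hh hζ]
  split_ifs
  · have hx₀ : e ! * (n + 1).descFactorial p = (n + 1)! := by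
      rw [← he, ← Nat.factorial_mul_descFactorial (Nat.le_add_left p e), Nat.add_sub_cancel]
    have hx₁ : s ! * (s + b).descFactorial b = (s + b)! := by
      rw [← Nat.factorial_mul_descFactorial (Nat.le_add_left b s), Nat.add_sub_cancel]
    have key : e ! * s ! * ((n + (s + b)).choose (s + b) * (n + 1).descFactorial p
        * (s + b).descFactorial b) = (n + (s + b))! * (n + 1) := calc
      _ = (e ! * (n + 1).descFactorial p) * (s ! * (s + b).descFactorial b)
          * (n + (s + b)).choose (s + b) := by ring
      _ = (n + 1) * ((n + (s + b)).choose (s + b) * n ! * (s + b)!) := by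
        rw [hx₀, hx₁, Nat.factorial_succ]; ring
      _ = _ := by rw [Nat.add_choose_mul_factorial_mul_factorial, mul_comm]
    rw [show ((n + (s + b) : ℕ) : ℂ) + 1 - (s + b : ℕ) = (n + 1 : ℕ) by push_cast; ring]
    exact_mod_cast key
  · simp only [zero_mul, mul_zero]

theorem le_finrank_Hspan_X_zero_mul_rootsOfUnityForm {ζ : ℂ} {h d k : ℕ} (hh : h ≠ 0)
    (hζ : IsPrimitiveRoot ζ h) (hk₁ : 2 * h ≤ k + 1) (hk₂ : 2 * h + k ≤ d + 1) :
    2 * h ≤ Module.finrank ℂ (Hspan k (X 0 * rootsOfUnityForm ζ h d)) := by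
  set G := X 0 * rootsOfUnityForm ζ h d
  let v (b : Fin (2 * h)) : Hspan k G :=
    ⟨derivList (List.replicate (k - b) 0 ++ List.replicate b 1) G,
      Submodule.subset_span ⟨_, by simp; omega, rfl⟩⟩
  let Φ : MvPolynomial (Fin 2) ℂ →ₗ[ℂ] Fin (2 * h) → ℂ := LinearMap.pi fun s =>
    ((d + 1 - k - s)! * (s : ℕ)! / d ! : ℂ) • lcoeff ℂ (binExp (d + 1 - k - s) s)
  have hΦv : Φ ∘ (Hspan k G).subtype ∘ v = fun b => cyclicHankel ℂ h (d + 1) b := by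
    ext b s
    have hb := b.2
    have hs := s.2
    have hentry := coeff_binExp_derivList_X_zero_mul_rootsOfUnityForm hh hζ
      (d := d) (e := d + 1 - k - s) (p := k - b) (s := s) (b := b) (by omega) (by omega)
    simp only [Function.comp_apply, Φ, v, LinearMap.pi_apply, LinearMap.smul_apply, lcoeff_apply,
      Submodule.subtype_apply, smul_eq_mul, div_mul_eq_mul_div, cyclicHankel, Matrix.of_apply]
    rw [hentry, add_comm (b : ℕ)]
    split_ifs
    · exact mul_div_cancel_left₀ _ (Nat.cast_ne_zero.mpr d.factorial_ne_zero)
    · rw [zero_div]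
  have hv : LinearIndependent ℂ v :=
    .of_comp _ (.of_comp Φ (hΦv ▸ linearIndependent_cyclicHankel ℂ h _))
  simpa using hv.fintype_card_le_finrank

theorem binary_x0F_high_catalecticant_general (d h : ℕ) (hh : 0 < h)
    (hgen : 2 * h < (d + 3) / 2) :
    ∃ F : MvPolynomial (Fin 2) ℂ, F.IsHomogeneous d ∧ srk d F ≤ h ∧
      2 * h ≤ Module.finrank ℂ (Hspan ((d + 1) / 2) (X 0 * F)) := by
  have hζ := Complex.isPrimitiveRoot_exp h hh.ne'
  exact ⟨_, isHomogeneous_rootsOfUnityForm _ h d, srk_rootsOfUnityForm_le _ h d,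
    le_finrank_Hspan_X_zero_mul_rootsOfUnityForm hh.ne' hζ (by omega) (by omega)⟩

/-- For positive integers `d, h` with `2h < ⌈(d+2)/2⌉ = g_{d+1}` there is a
binary form `F` of degree `d` with `srk F ≤ h` such that the span of the
`⌊(d+1)/2⌋`-th order partial derivatives of `x₀F` has dimension at least `2h`
(equivalently, the middle Hankel/catalecticant matrix of `x₀F` has rank at least `2h`). -/
theorem binary_x0F_high_catalecticant (d h : ℕ) (hd : 0 < d) (hh : 0 < h)
    (hgen : 2 * h < (d + 3) / 2) :
    ∃ F : MvPolynomial (Fin 2) ℂ, F.IsHomogeneous d ∧ srk d F ≤ h ∧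
      2 * h ≤ Module.finrank ℂ (Hspan ((d + 1) / 2) (X 0 * F)) :=
  binary_x0F_high_catalecticant_general d h hh hgen
end

section
/- Fix an integer d ≥ 1 and scalars Z₀, …, Z_d ∈ ℂ. Let M_d(Z) be the Hankel matrix with entry Z_{i+j} in position (i,j) (indices starting at 0), of size (n+1)×(n+1) if d = 2n and of size (n+2)×(n+1) if d = 2n+1. Define Z′ᵢ = ((d+1−i)/(d+1))·Zᵢ for 0 ≤ i ≤ d and Z′_{d+1} = 0, and let M_{d+1}(Z′) be the corresponding Hankel matrix of the next size. If rank M_d(Z) ≤ h, then rank M_{d+1}(Z′) ≤ 2h. -/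
/-!
Split the weight as `d + 1 - (i + j) = (p - i) + (q - j)` with `p + q = d + 1`. Up to the
factor `1 / (d + 1)`, `M_{d+1}(Z′)` becomes the sum of a row-weighted and a column-weighted
Hankel matrix of `Z`, and since `p - i` vanishes on the last row and `q - j` on the last
column, each summand has rank at most that of a Hankel matrix of `Z₀, …, Z_d` of some shape.
For odd `d` both shapes are `M_d(Z)` or its transpose. For even `d = 2n` one of them is
`(n + 2) × n`, and its rank is bounded by that of the square `M_d(Z)`: both zero-paddings of a
kernel vector of the square matrix are kernel vectors of the `n × (n + 2)` transpose, and
front-padding a kernel vector whose last nonzero entry lies as far right as possible gives a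
vector outside the back-padded kernel, so the kernel gains at least one dimension.
-/

open Matrix

/-- The Hankel matrix associated with scalars `Z₀, Z₁, Z₂, …`: the entry in position
`(i, j)` is `Z (i + j)`. For `d = 2n` it has size `(n+1) × (n+1)` and for `d = 2n+1` it has
size `(n+2) × (n+1)`, so the entries used are exactly `Z₀, …, Z_d`. -/
def hankelMatrix (d : ℕ) (Z : ℕ → ℂ) :
    Matrix (Fin (d / 2 + d % 2 + 1)) (Fin (d / 2 + 1)) ℂ :=
  fun i j => Z (i + j)

section

variable {R : Type*}

def hankel (Z : ℕ → R) (m n : ℕ) : Matrix (Fin m) (Fin n) R :=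
  of fun i j => Z (i + j)

@[simp]
lemma hankel_apply (Z : ℕ → R) {m n : ℕ} (i : Fin m) (j : Fin n) :
    hankel Z m n i j = Z (i + j) := rfl

lemma transpose_hankel (Z : ℕ → R) (m n : ℕ) : (hankel Z m n)ᵀ = hankel Z n m := by
  ext i j
  simp [add_comm]

lemma hankel_mul_left [Mul R] (c : R) (Z : ℕ → R) (m n : ℕ) :
    hankel (fun k => c * Z k) m n = c • hankel Z m n := rfl

end

lemma hankelMatrix_eq (d : ℕ) (Z : ℕ → ℂ) :
    hankelMatrix d Z = hankel Z (d / 2 + d % 2 + 1) (d / 2 + 1) := rfl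

section

variable {K : Type*} [Field K]

lemma Matrix.rank_add_le {m n : Type*} [Fintype n] (A B : Matrix m n K) :
    (A + B).rank ≤ A.rank + B.rank := by
  rw [rank, rank, rank, mulVecLin_add]
  exact (Submodule.finrank_mono (LinearMap.range_add_le _ _)).trans
    (Submodule.finrank_add_le_finrank_add_finrank _ _)

lemma Matrix.rank_smul_le {m n : Type*} [Fintype m] [Fintype n] [DecidableEq m] (c : K)
    (A : Matrix m n K) : (c • A).rank ≤ A.rank := by
  simpa using rank_mul_le_right (c • (1 : Matrix m m K)) A

lemma rank_of_mul_row_le {m n p : ℕ} (α : ℕ → K) (hα : ∀ i, p ≤ i → α i = 0)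
    (f : ℕ → ℕ → K) :
    (of fun (i : Fin m) (j : Fin n) => α i * f i j).rank ≤
      (of fun (i : Fin p) (j : Fin n) => f i j).rank := by
  have hfactor : (of fun (i : Fin m) (j : Fin n) => α i * f i j) =
      (of fun (i : Fin m) (k : Fin p) => if (i : ℕ) = k then α i else 0) *
        of fun (k : Fin p) (j : Fin n) => f k j := by
    ext i j
    simp only [mul_apply, of_apply]
    rw [Fin.sum_univ_eq_sum_range (fun k => (if (i : ℕ) = k then α i else 0) * f k j)]
    simp only [ite_mul, zero_mul, Finset.sum_ite_eq, Finset.mem_range]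
    split_ifs with hi
    · rfl
    · rw [hα i (not_lt.mp hi), zero_mul]
  rw [hfactor]
  exact rank_mul_le_right _ _

lemma rank_of_mul_col_le {m n q : ℕ} (β : ℕ → K) (hβ : ∀ j, q ≤ j → β j = 0)
    (f : ℕ → ℕ → K) :
    (of fun (i : Fin m) (j : Fin n) => β j * f i j).rank ≤
      (of fun (i : Fin m) (j : Fin q) => f i j).rank := by
  rw [← rank_transpose, ← rank_transpose (of fun (i : Fin m) (j : Fin q) => f i j)]
  exact rank_of_mul_row_le β hβ fun j i => f i j

lemma exists_max_support_index {ι : Type*} [Fintype ι] [LinearOrder ι]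
    {S : Set (ι → K)} (hS : ∃ v ∈ S, v ≠ 0) :
    ∃ w ∈ S, ∃ m, w m ≠ 0 ∧ ∀ v ∈ S, ∀ j, m < j → v j = 0 := by
  classical
  set T := Finset.univ.filter fun m : ι => ∃ v ∈ S, v m ≠ 0
  have hT : T.Nonempty := by
    obtain ⟨v, hv, hv0⟩ := hS
    obtain ⟨m, hm⟩ := Function.ne_iff.mp hv0
    exact ⟨m, Finset.mem_filter.mpr ⟨Finset.mem_univ _, v, hv, hm⟩⟩
  obtain ⟨w, hw, hwm⟩ := (Finset.mem_filter.mp (T.max'_mem hT)).2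
  refine ⟨w, hw, T.max' hT, hwm, fun v hv j hj => ?_⟩
  by_contra hvj
  exact (T.le_max' j (Finset.mem_filter.mpr ⟨Finset.mem_univ _, v, hv, hvj⟩)).not_gt hj

lemma rank_hankel_congr (Z : ℕ → K) {m n m' n' : ℕ} (hm : m = m') (hn : n = n') :
    (hankel Z m n).rank = (hankel Z m' n').rank := by
  subst hm hn
  rfl

lemma rank_hankel_mul_sub_le (Z : ℕ → K) {m n p q s : ℕ} (hs : p + q = s) (hm : m ≤ p + 1)
    (hn : n ≤ q + 1) :
    (hankel (fun k => ((s - k : ℕ) : K) * Z k) m n).rank ≤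
      (hankel Z p n).rank + (hankel Z m q).rank := by
  have hsplit : hankel (fun k => ((s - k : ℕ) : K) * Z k) m n =
      (of fun (i : Fin m) (j : Fin n) => ((p - i : ℕ) : K) * Z (i + j)) +
        of fun (i : Fin m) (j : Fin n) => ((q - j : ℕ) : K) * Z (i + j) := by
    ext i j
    have hweight : s - (i + j) = (p - i) + (q - j) := by omega
    simp only [hankel_apply, Matrix.add_apply, of_apply, hweight, Nat.cast_add, add_mul]
  rw [hsplit]
  refine (rank_add_le _ _).trans (add_le_add ?_ ?_)
  · exact rank_of_mul_row_le (fun i => ((p - i : ℕ) : K)) (fun i hi => by simp [hi])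
      fun i j => Z (i + j)
  · exact rank_of_mul_col_le (fun j => ((q - j : ℕ) : K)) (fun j hj => by simp [hj])
      fun i j => Z (i + j)

lemma extend_castSucc_mem_ker_hankel (Z : ℕ → K) {a b : ℕ} {v : Fin (b + 1) → K}
    (hv : v ∈ LinearMap.ker (hankel Z (a + 1) (b + 1)).mulVecLin) :
    Function.extend Fin.castSucc v 0 ∈ LinearMap.ker (hankel Z a (b + 2)).mulVecLin := by
  refine LinearMap.mem_ker.mpr (funext fun i => ?_)
  have hrow := congrFun (LinearMap.mem_ker.mp hv) i.castSucc
  simp only [mulVecLin_apply, mulVec, dotProduct, Fin.sum_univ_castSucc (n := b + 1),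
    (Fin.castSucc_injective _).extend_apply, hankel_apply, Fin.val_castSucc] at hrow ⊢
  rw [Function.extend_apply' _ _ _ fun ⟨j, hj⟩ => Fin.castSucc_ne_last j hj]
  simpa using hrow

lemma extend_succ_mem_ker_hankel (Z : ℕ → K) {a b : ℕ} {v : Fin (b + 1) → K}
    (hv : v ∈ LinearMap.ker (hankel Z (a + 1) (b + 1)).mulVecLin) :
    Function.extend Fin.succ v 0 ∈ LinearMap.ker (hankel Z a (b + 2)).mulVecLin := by
  refine LinearMap.mem_ker.mpr (funext fun i => ?_)
  have hrow := congrFun (LinearMap.mem_ker.mp hv) i.succ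
  simp only [mulVecLin_apply, mulVec, dotProduct, Fin.sum_univ_succ (n := b + 1),
    (Fin.succ_injective _).extend_apply, hankel_apply, Fin.val_succ] at hrow ⊢
  rw [Function.extend_apply' _ _ _ fun ⟨j, hj⟩ => Fin.succ_ne_zero j hj]
  simpa [add_assoc, add_comm 1] using hrow

lemma map_ker_hankel_lt_ker_hankel (Z : ℕ → K) {a b : ℕ}
    (hker : LinearMap.ker (hankel Z (a + 1) (b + 1)).mulVecLin ≠ ⊥) :
    (LinearMap.ker (hankel Z (a + 1) (b + 1)).mulVecLin).map
        (Function.ExtendByZero.linearMap K (Fin.castSucc : Fin (b + 1) → Fin (b + 2))) <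
      LinearMap.ker (hankel Z a (b + 2)).mulVecLin := by
  obtain ⟨w, hw, m, hwm, hlast⟩ :=
    exists_max_support_index ((Submodule.ne_bot_iff _).mp hker)
  refine lt_of_le_of_ne (Submodule.map_le_iff_le_comap.mpr fun v hv =>
    extend_castSucc_mem_ker_hankel Z hv) fun heq => hwm ?_
  obtain ⟨v, hv, hvw⟩ := heq ▸ extend_succ_mem_ker_hankel Z hw
  rw [← (Fin.succ_injective _).extend_apply w 0 m, ← hvw]
  change Function.extend Fin.castSucc v 0 m.succ = 0
  rcases Fin.eq_castSucc_or_eq_last m.succ with ⟨j, hj⟩ | hj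
  · rw [hj, (Fin.castSucc_injective _).extend_apply]
    have hjm : (j : ℕ) = m + 1 := by simpa using (congrArg Fin.val hj).symm
    exact hlast v hv j (Fin.lt_def.mpr (by omega))
  · rw [hj]
    exact Function.extend_apply' _ _ _ fun ⟨j, hj⟩ => Fin.castSucc_ne_last j hj

lemma rank_hankel_le_succ_left (Z : ℕ → K) {a b : ℕ} (hab : a ≤ b + 1) :
    (hankel Z a (b + 2)).rank ≤ (hankel Z (a + 1) (b + 1)).rank := by
  have hA := LinearMap.finrank_range_add_finrank_ker (hankel Z a (b + 2)).mulVecLin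
  have hB := LinearMap.finrank_range_add_finrank_ker (hankel Z (a + 1) (b + 1)).mulVecLin
  rw [Module.finrank_fin_fun] at hA hB
  rw [rank, rank]
  by_cases hker : LinearMap.ker (hankel Z (a + 1) (b + 1)).mulVecLin = ⊥
  · rw [hker, finrank_bot] at hB
    have : Module.finrank K (LinearMap.range (hankel Z a (b + 2)).mulVecLin) ≤ a :=
      rank_le_height _
    omega
  have hlt : Module.finrank K (LinearMap.ker (hankel Z (a + 1) (b + 1)).mulVecLin) <
      Module.finrank K (LinearMap.ker (hankel Z a (b + 2)).mulVecLin) := by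
    rw [(Submodule.equivMapOfInjective
      (Function.ExtendByZero.linearMap K (Fin.castSucc : Fin (b + 1) → Fin (b + 2)))
      (Function.extend_injective (Fin.castSucc_injective _) 0) _).finrank_eq]
    exact Submodule.finrank_lt_finrank_of_lt (map_ker_hankel_lt_ker_hankel Z hker)
  omega

end

theorem hankel_rank_le_general (d : ℕ) (Z : ℕ → ℂ) (h : ℕ)
    (hZ : (hankelMatrix d Z).rank ≤ h) :
    (hankelMatrix (d + 1) (fun i => (((d + 1 - i : ℕ) : ℂ) / ((d : ℂ) + 1)) * Z i)).rank ≤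
      2 * h := by
  have hweight : (fun i => (((d + 1 - i : ℕ) : ℂ) / ((d : ℂ) + 1)) * Z i) =
      fun i => ((d : ℂ) + 1)⁻¹ * (((d + 1 - i : ℕ) : ℂ) * Z i) := by
    funext i
    ring
  rw [hankelMatrix_eq] at hZ
  rw [hankelMatrix_eq, hweight, hankel_mul_left]
  refine (rank_smul_le _ _).trans ?_
  obtain ⟨n, rfl | rfl⟩ := Nat.even_or_odd' d
  · rw [rank_hankel_congr Z (m' := n + 1) (n' := n + 1) (by omega) (by omega)] at hZ
    rw [rank_hankel_congr _ (m' := n + 2) (n' := n + 1) (by omega) (by omega)]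
    calc _ ≤ (hankel Z (n + 1) (n + 1)).rank + (hankel Z (n + 2) n).rank :=
          rank_hankel_mul_sub_le Z (by omega) (by omega) (by omega)
      _ ≤ h + h := by
          refine add_le_add hZ (le_trans ?_ hZ)
          rw [← transpose_hankel, rank_transpose]
          exact rank_hankel_le_succ_left Z n.le_succ
      _ = 2 * h := (two_mul h).symm
  · rw [rank_hankel_congr Z (m' := n + 2) (n' := n + 1) (by omega) (by omega)] at hZ
    rw [rank_hankel_congr _ (m' := n + 2) (n' := n + 2) (by omega) (by omega)]
    calc _ ≤ (hankel Z (n + 1) (n + 2)).rank + (hankel Z (n + 2) (n + 1)).rank :=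
          rank_hankel_mul_sub_le Z (by omega) (by omega) (by omega)
      _ ≤ h + h := by
          rw [← transpose_hankel, rank_transpose]
          exact add_le_add hZ hZ
      _ = 2 * h := (two_mul h).symm

/-- Given `Z₀, …, Z_d`, set `Z′ᵢ = ((d+1-i)/(d+1))·Zᵢ` for `i ≤ d` and
`Z′_{d+1} = 0` (note `(d+1) - i = 0` in `ℕ` for `i ≥ d+1`). If the Hankel matrix `M_d(Z)`
has rank at most `h`, then the Hankel matrix `M_{d+1}(Z′)` of the next size has rank at
most `2h`. -/
theorem hankel_rank_le (d : ℕ) (hd : 1 ≤ d) (Z : ℕ → ℂ) (h : ℕ)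
    (hZ : (hankelMatrix d Z).rank ≤ h) :
    (hankelMatrix (d + 1) (fun i => (((d + 1 - i : ℕ) : ℂ) / ((d : ℂ) + 1)) * Z i)).rank ≤
      2 * h :=
  hankel_rank_le_general d Z h hZ
end

section
/- There exist linear forms L₁, L₂, L₃ ∈ ℂ[x₀, x₁, x₂]₁ such that, setting F = L₁³ + L₂³ + L₃³, the quartic x₀F satisfies dim H_{∂²(x₀F)} = 6; that is, the second-order partial derivatives of x₀F span the whole 6-dimensional space of quadrics in three variables, so the 6×6 second catalecticant matrix of x₀F is nonsingular. -/
open MvPolynomial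

section Aux

/-- Our certificate quartic. -/
noncomputable def GG : MvPolynomial (Fin 3) ℂ :=
  X 0 * ((X 0 + X 1) ^ 3 + (X 1 + X 2) ^ 3 + (X 0 + X 2) ^ 3)

/-- The set of second-order partial derivatives of `GG`. -/
def SS : Set (MvPolynomial (Fin 3) ℂ) :=
  {P | ∃ l : List (Fin 3), l.length = 2 ∧ P = derivList l GG}

/-- Exponent vectors of the six degree-two monomials. -/
noncomputable def μμ : Fin 6 → (Fin 3 →₀ ℕ) := fun k =>
  match k with
  | ⟨0,_⟩ => Finsupp.single 0 1 + Finsupp.single 0 1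
  | ⟨1,_⟩ => Finsupp.single 0 1 + Finsupp.single 1 1
  | ⟨2,_⟩ => Finsupp.single 0 1 + Finsupp.single 2 1
  | ⟨3,_⟩ => Finsupp.single 1 1 + Finsupp.single 1 1
  | ⟨4,_⟩ => Finsupp.single 1 1 + Finsupp.single 2 1
  | ⟨5,_⟩ => Finsupp.single 2 1 + Finsupp.single 2 1

/-- The six degree-two monomials. -/
noncomputable def ww : Fin 6 → MvPolynomial (Fin 3) ℂ := fun k => monomial (μμ k) 1

lemma μμ_inj : Function.Injective μμ := by
  intro a b hab
  fin_cases a <;> fin_cases b <;> first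
  | rfl
  | (exfalso
     have h0 := DFunLike.congr_fun hab 0
     have h1 := DFunLike.congr_fun hab 1
     have h2 := DFunLike.congr_fun hab 2
     simp [μμ, Finsupp.single_apply] at h0 h1 h2)

lemma ww_li : LinearIndependent ℂ ww := by
  have h := (basisMonomials (Fin 3) ℂ).linearIndependent.comp μμ μμ_inj
  rw [coe_basisMonomials] at h
  exact h

lemma XX_eq (a b : Fin 3) : (X a * X b : MvPolynomial (Fin 3) ℂ)
    = monomial (Finsupp.single a 1 + Finsupp.single b 1) 1 := by
  rw [← one_mul (1:ℂ), ← monomial_mul, ← X_pow_eq_monomial, ← X_pow_eq_monomial, pow_one, pow_one]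

lemma ww0 : ww 0 = X 0 * X 0 := by rw [XX_eq]; rfl
lemma ww1 : ww 1 = X 0 * X 1 := by rw [XX_eq]; rfl
lemma ww2 : ww 2 = X 0 * X 2 := by rw [XX_eq]; rfl
lemma ww3 : ww 3 = X 1 * X 1 := by rw [XX_eq]; rfl
lemma ww4 : ww 4 = X 1 * X 2 := by rw [XX_eq]; rfl
lemma ww5 : ww 5 = X 2 * X 2 := by rw [XX_eq]; rfl

lemma derivList_pair (a b : Fin 3) (F : MvPolynomial (Fin 3) ℂ) :
    derivList [a, b] F = pderiv b (pderiv a F) := rfl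

lemma pd01 : pderiv (0 : Fin 3) (X 1 : MvPolynomial (Fin 3) ℂ) = 0 := pderiv_X_of_ne (by decide)
lemma pd02 : pderiv (0 : Fin 3) (X 2 : MvPolynomial (Fin 3) ℂ) = 0 := pderiv_X_of_ne (by decide)
lemma pd10 : pderiv (1 : Fin 3) (X 0 : MvPolynomial (Fin 3) ℂ) = 0 := pderiv_X_of_ne (by decide)
lemma pd12 : pderiv (1 : Fin 3) (X 2 : MvPolynomial (Fin 3) ℂ) = 0 := pderiv_X_of_ne (by decide)
lemma pd20 : pderiv (2 : Fin 3) (X 0 : MvPolynomial (Fin 3) ℂ) = 0 := pderiv_X_of_ne (by decide)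
lemma pd21 : pderiv (2 : Fin 3) (X 1 : MvPolynomial (Fin 3) ℂ) = 0 := pderiv_X_of_ne (by decide)


lemma hD00 : derivList [0, 0] GG = (24:ℂ) • ww 0 + (18:ℂ) • ww 1 + (18:ℂ) • ww 2
    + (6:ℂ) • ww 3 + (6:ℂ) • ww 5 := by
  simp only [derivList_pair, GG, ww0, ww1, ww2, ww3, ww4, ww5,
    smul_eq_C_mul, map_ofNat, pow_succ, pow_zero, one_mul, map_add, map_zero,
    Derivation.map_one_eq_zero, pderiv_mul, pderiv_X_self,
    pd01, pd02, pd10, pd12, pd20, pd21]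
  ring
lemma hD01 : derivList [0, 1] GG = (9:ℂ) • ww 0 + (12:ℂ) • ww 1 + (6:ℂ) • ww 3
    + (6:ℂ) • ww 4 + (3:ℂ) • ww 5 := by
  simp only [derivList_pair, GG, ww0, ww1, ww2, ww3, ww4, ww5,
    smul_eq_C_mul, map_ofNat, pow_succ, pow_zero, one_mul, map_add, map_zero,
    Derivation.map_one_eq_zero, pderiv_mul, pderiv_X_self,
    pd01, pd02, pd10, pd12, pd20, pd21]
  ring
lemma hD10 : derivList [1, 0] GG = (9:ℂ) • ww 0 + (12:ℂ) • ww 1 + (6:ℂ) • ww 3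
    + (6:ℂ) • ww 4 + (3:ℂ) • ww 5 := by
  simp only [derivList_pair, GG, ww0, ww1, ww2, ww3, ww4, ww5,
    smul_eq_C_mul, map_ofNat, pow_succ, pow_zero, one_mul, map_add, map_zero,
    Derivation.map_one_eq_zero, pderiv_mul, pderiv_X_self,
    pd01, pd02, pd10, pd12, pd20, pd21]
  ring
lemma hD02 : derivList [0, 2] GG = (9:ℂ) • ww 0 + (12:ℂ) • ww 2 + (3:ℂ) • ww 3
    + (6:ℂ) • ww 4 + (6:ℂ) • ww 5 := by
  simp only [derivList_pair, GG, ww0, ww1, ww2, ww3, ww4, ww5,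
    smul_eq_C_mul, map_ofNat, pow_succ, pow_zero, one_mul, map_add, map_zero,
    Derivation.map_one_eq_zero, pderiv_mul, pderiv_X_self,
    pd01, pd02, pd10, pd12, pd20, pd21]
  ring
lemma hD20 : derivList [2, 0] GG = (9:ℂ) • ww 0 + (12:ℂ) • ww 2 + (3:ℂ) • ww 3
    + (6:ℂ) • ww 4 + (6:ℂ) • ww 5 := by
  simp only [derivList_pair, GG, ww0, ww1, ww2, ww3, ww4, ww5,
    smul_eq_C_mul, map_ofNat, pow_succ, pow_zero, one_mul, map_add, map_zero,
    Derivation.map_one_eq_zero, pderiv_mul, pderiv_X_self,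
    pd01, pd02, pd10, pd12, pd20, pd21]
  ring
lemma hD11 : derivList [1, 1] GG = (6:ℂ) • ww 0 + (12:ℂ) • ww 1 + (6:ℂ) • ww 2 := by
  simp only [derivList_pair, GG, ww0, ww1, ww2, ww3, ww4, ww5,
    smul_eq_C_mul, map_ofNat, pow_succ, pow_zero, one_mul, map_add, map_zero,
    Derivation.map_one_eq_zero, pderiv_mul, pderiv_X_self,
    pd01, pd02, pd10, pd12, pd20, pd21]
  ring
lemma hD12 : derivList [1, 2] GG = (6:ℂ) • ww 1 + (6:ℂ) • ww 2 := by
  simp only [derivList_pair, GG, ww0, ww1, ww2, ww3, ww4, ww5,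
    smul_eq_C_mul, map_ofNat, pow_succ, pow_zero, one_mul, map_add, map_zero,
    Derivation.map_one_eq_zero, pderiv_mul, pderiv_X_self,
    pd01, pd02, pd10, pd12, pd20, pd21]
  ring
lemma hD21 : derivList [2, 1] GG = (6:ℂ) • ww 1 + (6:ℂ) • ww 2 := by
  simp only [derivList_pair, GG, ww0, ww1, ww2, ww3, ww4, ww5,
    smul_eq_C_mul, map_ofNat, pow_succ, pow_zero, one_mul, map_add, map_zero,
    Derivation.map_one_eq_zero, pderiv_mul, pderiv_X_self,
    pd01, pd02, pd10, pd12, pd20, pd21]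
  ring
lemma hD22 : derivList [2, 2] GG = (6:ℂ) • ww 0 + (6:ℂ) • ww 1 + (12:ℂ) • ww 2 := by
  simp only [derivList_pair, GG, ww0, ww1, ww2, ww3, ww4, ww5,
    smul_eq_C_mul, map_ofNat, pow_succ, pow_zero, one_mul, map_add, map_zero,
    Derivation.map_one_eq_zero, pderiv_mul, pderiv_X_self,
    pd01, pd02, pd10, pd12, pd20, pd21]
  ring

/-- membership of the monomials in the span of the `ww` family -/
lemma wmem (k : Fin 6) : ww k ∈ Submodule.span ℂ (Set.range ww) :=
  Submodule.subset_span ⟨k, rfl⟩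

lemma Dspan (a b : Fin 3) : derivList [a, b] GG ∈ Submodule.span ℂ SS :=
  Submodule.subset_span ⟨[a, b], rfl, rfl⟩

lemma Dmem00 : derivList [0, 0] GG ∈ Submodule.span ℂ (Set.range ww) := by
  rw [hD00]
  exact add_mem (add_mem (add_mem (add_mem (Submodule.smul_mem _ _ (wmem 0))
    (Submodule.smul_mem _ _ (wmem 1))) (Submodule.smul_mem _ _ (wmem 2)))
    (Submodule.smul_mem _ _ (wmem 3))) (Submodule.smul_mem _ _ (wmem 5))
lemma Dmem01 : derivList [0, 1] GG ∈ Submodule.span ℂ (Set.range ww) := by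
  rw [hD01]
  exact add_mem (add_mem (add_mem (add_mem (Submodule.smul_mem _ _ (wmem 0))
    (Submodule.smul_mem _ _ (wmem 1))) (Submodule.smul_mem _ _ (wmem 3)))
    (Submodule.smul_mem _ _ (wmem 4))) (Submodule.smul_mem _ _ (wmem 5))
lemma Dmem10 : derivList [1, 0] GG ∈ Submodule.span ℂ (Set.range ww) := by
  rw [hD10]
  exact add_mem (add_mem (add_mem (add_mem (Submodule.smul_mem _ _ (wmem 0))
    (Submodule.smul_mem _ _ (wmem 1))) (Submodule.smul_mem _ _ (wmem 3)))
    (Submodule.smul_mem _ _ (wmem 4))) (Submodule.smul_mem _ _ (wmem 5))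
lemma Dmem02 : derivList [0, 2] GG ∈ Submodule.span ℂ (Set.range ww) := by
  rw [hD02]
  exact add_mem (add_mem (add_mem (add_mem (Submodule.smul_mem _ _ (wmem 0))
    (Submodule.smul_mem _ _ (wmem 2))) (Submodule.smul_mem _ _ (wmem 3)))
    (Submodule.smul_mem _ _ (wmem 4))) (Submodule.smul_mem _ _ (wmem 5))
lemma Dmem20 : derivList [2, 0] GG ∈ Submodule.span ℂ (Set.range ww) := by
  rw [hD20]
  exact add_mem (add_mem (add_mem (add_mem (Submodule.smul_mem _ _ (wmem 0))
    (Submodule.smul_mem _ _ (wmem 2))) (Submodule.smul_mem _ _ (wmem 3)))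
    (Submodule.smul_mem _ _ (wmem 4))) (Submodule.smul_mem _ _ (wmem 5))
lemma Dmem11 : derivList [1, 1] GG ∈ Submodule.span ℂ (Set.range ww) := by
  rw [hD11]
  exact add_mem (add_mem (Submodule.smul_mem _ _ (wmem 0))
    (Submodule.smul_mem _ _ (wmem 1))) (Submodule.smul_mem _ _ (wmem 2))
lemma Dmem12 : derivList [1, 2] GG ∈ Submodule.span ℂ (Set.range ww) := by
  rw [hD12]
  exact add_mem (Submodule.smul_mem _ _ (wmem 1)) (Submodule.smul_mem _ _ (wmem 2))
lemma Dmem21 : derivList [2, 1] GG ∈ Submodule.span ℂ (Set.range ww) := by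
  rw [hD21]
  exact add_mem (Submodule.smul_mem _ _ (wmem 1)) (Submodule.smul_mem _ _ (wmem 2))
lemma Dmem22 : derivList [2, 2] GG ∈ Submodule.span ℂ (Set.range ww) := by
  rw [hD22]
  exact add_mem (add_mem (Submodule.smul_mem _ _ (wmem 0))
    (Submodule.smul_mem _ _ (wmem 1))) (Submodule.smul_mem _ _ (wmem 2))

lemma wmemS0 : ww 0 ∈ Submodule.span ℂ SS := by
  have he : ww 0 = ((1:ℂ)/12) • (derivList [1,1] GG - (3:ℂ) • derivList [1,2] GG
      + derivList [2,2] GG) := by rw [hD11, hD12, hD22]; module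
  rw [he]
  exact Submodule.smul_mem _ _ (add_mem (sub_mem (Dspan 1 1)
    (Submodule.smul_mem _ _ (Dspan 1 2))) (Dspan 2 2))
lemma wmemS1 : ww 1 ∈ Submodule.span ℂ SS := by
  have he : ww 1 = ((1:ℂ)/12) • (derivList [1,1] GG + derivList [1,2] GG
      - derivList [2,2] GG) := by rw [hD11, hD12, hD22]; module
  rw [he]
  exact Submodule.smul_mem _ _ (sub_mem (add_mem (Dspan 1 1) (Dspan 1 2)) (Dspan 2 2))
lemma wmemS2 : ww 2 ∈ Submodule.span ℂ SS := by
  have he : ww 2 = ((1:ℂ)/12) • (-derivList [1,1] GG + derivList [1,2] GG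
      + derivList [2,2] GG) := by rw [hD11, hD12, hD22]; module
  rw [he]
  exact Submodule.smul_mem _ _ (add_mem (add_mem (neg_mem (Dspan 1 1)) (Dspan 1 2)) (Dspan 2 2))
lemma wmemS3 : ww 3 ∈ Submodule.span ℂ SS := by
  have he : ww 3 = ((1:ℂ)/12) • (derivList [0,0] GG + (2:ℂ) • derivList [0,1] GG
      - (2:ℂ) • derivList [0,2] GG - (6:ℂ) • derivList [1,1] GG
      + (3:ℂ) • derivList [1,2] GG + (2:ℂ) • derivList [2,2] GG) := by
    rw [hD00, hD01, hD02, hD11, hD12, hD22]; module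
  rw [he]
  exact Submodule.smul_mem _ _ (add_mem (add_mem (sub_mem (sub_mem (add_mem (Dspan 0 0)
    (Submodule.smul_mem _ _ (Dspan 0 1))) (Submodule.smul_mem _ _ (Dspan 0 2)))
    (Submodule.smul_mem _ _ (Dspan 1 1))) (Submodule.smul_mem _ _ (Dspan 1 2)))
    (Submodule.smul_mem _ _ (Dspan 2 2)))
lemma wmemS4 : ww 4 ∈ Submodule.span ℂ SS := by
  have he : ww 4 = ((1:ℂ)/24) • (-((3:ℂ) • derivList [0,0] GG) + (2:ℂ) • derivList [0,1] GG
      + (2:ℂ) • derivList [0,2] GG + (3:ℂ) • derivList [1,1] GG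
      - (4:ℂ) • derivList [1,2] GG + (3:ℂ) • derivList [2,2] GG) := by
    rw [hD00, hD01, hD02, hD11, hD12, hD22]; module
  rw [he]
  exact Submodule.smul_mem _ _ (add_mem (sub_mem (add_mem (add_mem (add_mem
    (neg_mem (Submodule.smul_mem _ _ (Dspan 0 0))) (Submodule.smul_mem _ _ (Dspan 0 1)))
    (Submodule.smul_mem _ _ (Dspan 0 2))) (Submodule.smul_mem _ _ (Dspan 1 1)))
    (Submodule.smul_mem _ _ (Dspan 1 2))) (Submodule.smul_mem _ _ (Dspan 2 2)))
lemma wmemS5 : ww 5 ∈ Submodule.span ℂ SS := by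
  have he : ww 5 = ((1:ℂ)/12) • (derivList [0,0] GG - (2:ℂ) • derivList [0,1] GG
      + (2:ℂ) • derivList [0,2] GG + (2:ℂ) • derivList [1,1] GG
      + (3:ℂ) • derivList [1,2] GG - (6:ℂ) • derivList [2,2] GG) := by
    rw [hD00, hD01, hD02, hD11, hD12, hD22]; module
  rw [he]
  exact Submodule.smul_mem _ _ (sub_mem (add_mem (add_mem (add_mem (sub_mem (Dspan 0 0)
    (Submodule.smul_mem _ _ (Dspan 0 1))) (Submodule.smul_mem _ _ (Dspan 0 2)))
    (Submodule.smul_mem _ _ (Dspan 1 1))) (Submodule.smul_mem _ _ (Dspan 1 2)))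
    (Submodule.smul_mem _ _ (Dspan 2 2)))

lemma hspan_eq : Hspan 2 GG = Submodule.span ℂ (Set.range ww) := by
  have hH : Hspan 2 GG = Submodule.span ℂ SS := rfl
  rw [hH]
  apply le_antisymm
  · rw [Submodule.span_le]
    rintro P ⟨l, hl, rfl⟩
    rcases l with _ | ⟨a, _ | ⟨b, _ | ⟨c, t⟩⟩⟩ <;> simp only [List.length] at hl
    · omega
    · omega
    swap
    · omega
    fin_cases a <;> fin_cases b
    · exact Dmem00
    · exact Dmem01
    · exact Dmem02
    · exact Dmem10
    · exact Dmem11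
    · exact Dmem12
    · exact Dmem20
    · exact Dmem21
    · exact Dmem22
  · rw [Submodule.span_le]
    rintro _ ⟨k, rfl⟩
    fin_cases k
    · exact wmemS0
    · exact wmemS1
    · exact wmemS2
    · exact wmemS3
    · exact wmemS4
    · exact wmemS5

end Aux

/-- There are linear forms `L₁, L₂, L₃` in `ℂ[x₀,x₁,x₂]` such that,
with `F = L₁³ + L₂³ + L₃³`, the second-order partial derivatives of the quartic `x₀F`
span the whole 6-dimensional space of quadrics: `dim H_{∂²(x₀F)} = 6`. -/
theorem cubic_n2_certificate :
    ∃ L₁ L₂ L₃ : MvPolynomial (Fin 3) ℂ,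
      L₁.IsHomogeneous 1 ∧ L₂.IsHomogeneous 1 ∧ L₃.IsHomogeneous 1 ∧
      Module.finrank ℂ (Hspan 2 (X 0 * (L₁ ^ 3 + L₂ ^ 3 + L₃ ^ 3))) = 6 := by
  refine ⟨X 0 + X 1, X 1 + X 2, X 0 + X 2,
    (isHomogeneous_X _ _).add (isHomogeneous_X _ _),
    (isHomogeneous_X _ _).add (isHomogeneous_X _ _),
    (isHomogeneous_X _ _).add (isHomogeneous_X _ _), ?_⟩
  show Module.finrank ℂ (Hspan 2 GG) = 6
  rw [hspan_eq, finrank_span_eq_card ww_li, Fintype.card_fin]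
end
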